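/- Let (p_1,…,p_k; λ_1,…,λ_n) be a dual vertex-star configuration and X = (p_1,…,p_k). Then for every integer s ≥ 1, α_{2s}(X) ≥ min{6s − 3, (s − 1)·n + 3}; that is, every nonzero homogeneous polynomial vanishing to order ≥ 2s at all of p_1,…,p_k has degree at least min{6s − 3, (s − 1)·n + 3}. -/

import Mathlib

/-!
The multiplicity of `F` at `p`, the order of the Taylor expansion `F (X + p)`, is additive under
products. Let `F ≠ 0` be homogeneous of degree `d` with multiplicity `≥ 2 (s + 1)` at every `p i`,
and `d < 6 (s + 1)`. On each line `lam j` lie three of the points, where `F` has multiplicity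
`> d / 3`: restricted to the line, `F` becomes a binary form of degree `d` with too many roots, so
it vanishes and `lam j ∣ F`. The `lam j` are pairwise non-associated primes, so
`F = (∏ j, lam j) G`; as exactly two of the lines pass through each `p i`, `G` has degree `d - n`
and multiplicity `≥ 2 s` everywhere. Induction on `s` then gives
`d ≥ min (6 s - 3) ((s - 1) n + 3)`, the step closing because `n ≥ 4`.
-/

open MvPolynomial

noncomputable section

/-- The polynomial ring `S = ℝ[x,y,z]`. -/
abbrev S3 : Type := MvPolynomial (Fin 3) ℝ

/-- The linear form with coefficient vector `p`, i.e. `p 0 • x + p 1 • y + p 2 • z`;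
`p` is the dual point of this linear form. -/
def linForm (p : Fin 3 → ℝ) : S3 := ∑ i, MvPolynomial.C (p i) * MvPolynomial.X i

/-- Iterated partial derivative along a list of coordinate directions, as a linear map. -/
def diffOp (L : List (Fin 3)) : S3 →ₗ[ℝ] S3 :=
  L.foldr (fun i f => (MvPolynomial.pderiv (R := ℝ) i).toLinearMap ∘ₗ f) LinearMap.id

/-- `F` vanishes to order `≥ s` at the point `p`: every iterated partial derivative of
total order at most `s - 1` vanishes at `p`. -/
def VanishesToOrder (F : S3) (p : Fin 3 → ℝ) (s : ℕ) : Prop :=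
  ∀ L : List (Fin 3), L.length < s → MvPolynomial.eval p (diffOp L F) = 0

/-- The subspace of polynomials vanishing to order `≥ s` at `p`. -/
def vanishSubmodule (p : Fin 3 → ℝ) (s : ℕ) : Submodule ℝ S3 :=
  ⨅ L ∈ {L : List (Fin 3) | L.length < s},
    LinearMap.ker ((MvPolynomial.aeval p).toLinearMap ∘ₗ diffOp L)

/-- Dimension of the degree-`d` graded piece of an ideal of `S`. -/
def idealDim (I : Ideal S3) (d : ℕ) : ℕ :=
  Module.finrank ℝ
    ↥(I.restrictScalars ℝ ⊓ MvPolynomial.homogeneousSubmodule (Fin 3) ℝ d)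

/-- Dimension of the space of degree-`d` homogeneous polynomials vanishing to order
`≥ m i` at each point `p i`. -/
def fatDim {k : ℕ} (p : Fin k → (Fin 3 → ℝ)) (m : Fin k → ℕ) (d : ℕ) : ℕ :=
  Module.finrank ℝ
    ↥(MvPolynomial.homogeneousSubmodule (Fin 3) ℝ d ⊓ ⨅ i, vanishSubmodule (p i) (m i))

/-- A list of vectors of `ℝ³` is pairwise non-proportional and nonzero. -/
def PairwiseNonProp {k : ℕ} (p : Fin k → (Fin 3 → ℝ)) : Prop :=
  (∀ i, p i ≠ 0) ∧ ∀ i j, i ≠ j → ∀ c : ℝ, p j ≠ c • p i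

/-- `α_s(X)`: least degree of a nonzero homogeneous polynomial vanishing to order `≥ s`
at every point of the list `X`. -/
def alphaDeg {k : ℕ} (p : Fin k → (Fin 3 → ℝ)) (s : ℕ) : ℕ :=
  sInf {d : ℕ | ∃ F : S3, F ≠ 0 ∧ F.IsHomogeneous d ∧ ∀ i, VanishesToOrder F (p i) s}

/-- The Waldschmidt constant `α̂(X) = inf { α_s(X)/s : s ≥ 1 }`. -/
def waldschmidt {k : ℕ} (p : Fin k → (Fin 3 → ℝ)) : ℝ :=
  sInf {x : ℝ | ∃ s : ℕ, 1 ≤ s ∧ x = (alphaDeg p s : ℝ) / (s : ℝ)}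

/-- Integer binomial coefficient `C(m, 2)`, zero for `m < 2`. -/
def choose2 (m : ℤ) : ℤ := if m < 2 then 0 else m * (m - 1) / 2

open Classical in
/-- A dual vertex-star configuration: pairwise non-proportional nonzero points
`p i` and pairwise non-proportional nonzero linear forms (given by coefficient
vectors `lam j`), `n ≥ 4`, such that every point lies on exactly two of the lines
and every line contains at least three of the points. -/
def DualVertexStar {k n : ℕ} (p : Fin k → (Fin 3 → ℝ)) (lam : Fin n → (Fin 3 → ℝ)) : Prop :=
  PairwiseNonProp p ∧ PairwiseNonProp lam ∧ 4 ≤ n ∧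
  (∀ i, (Finset.univ.filter fun j => MvPolynomial.eval (p i) (linForm (lam j)) = 0).card = 2) ∧
  (∀ j, 3 ≤ (Finset.univ.filter fun i => MvPolynomial.eval (p i) (linForm (lam j)) = 0).card)

namespace MvPolynomial

open Matrix

variable {σ τ K : Type*} [Field K]

theorem IsHomogeneous.degree_eq {P : MvPolynomial σ K} {d : ℕ} (hP : P.IsHomogeneous d)
    {m : σ →₀ ℕ} (hm : m ∈ P.support) : m.degree = d := by
  rw [Finsupp.degree_eq_weight_one]
  exact hP (mem_support_iff.mp hm)

theorem IsHomogeneous.eval_smul {P : MvPolynomial σ K} {d : ℕ} (hP : P.IsHomogeneous d) (c : K)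
    (y : σ → K) : eval (c • y) P = c ^ d * eval y P := by
  rw [eval_eq, eval_eq, Finset.mul_sum]
  refine Finset.sum_congr rfl fun m hm => ?_
  simp only [Pi.smul_apply, smul_eq_mul, mul_pow, Finset.prod_mul_distrib,
    Finset.prod_pow_eq_pow_sum, ← Finsupp.degree_apply, hP.degree_eq hm]
  ring

theorem eval_aeval {f : σ → MvPolynomial τ K} (y : τ → K) (F : MvPolynomial σ K) :
    eval y (aeval f F) = eval (fun i => eval y (f i)) F := by
  simpa [coe_aeval_eq_eval] using comp_aeval_apply (f := f) (aeval y) F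

theorem order_coe_le_degree {P : MvPolynomial σ K} {m : σ →₀ ℕ} (hm : m ∈ P.support) :
    (P : MvPowerSeries σ K).order ≤ m.degree :=
  MvPowerSeries.order_le (by rwa [coeff_coe, ← mem_support_iff])

theorem order_coe_ne_top {P : MvPolynomial σ K} (h0 : P ≠ 0) :
    (P : MvPowerSeries σ K).order ≠ ⊤ := by
  simpa using h0

theorem le_order_coe_of_isHomogeneous {P : MvPolynomial σ K} {d : ℕ} (hP : P.IsHomogeneous d) :
    (d : ℕ∞) ≤ (P : MvPowerSeries σ K).order :=
  MvPowerSeries.nat_le_order fun m hm => by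
    rw [coeff_coe]
    exact hP.coeff_eq_zero hm.ne

theorem order_coe_of_isHomogeneous {P : MvPolynomial σ K} {d : ℕ} (hP : P.IsHomogeneous d)
    (h0 : P ≠ 0) : (P : MvPowerSeries σ K).order = d := by
  obtain ⟨m, hm⟩ := support_nonempty.mpr h0
  exact le_antisymm (hP.degree_eq hm ▸ order_coe_le_degree hm) (le_order_coe_of_isHomogeneous hP)

theorem order_coe_le_totalDegree {P : MvPolynomial σ K} (h0 : P ≠ 0) :
    (P : MvPowerSeries σ K).order ≤ P.totalDegree := by
  obtain ⟨m, hm⟩ := support_nonempty.mpr h0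
  exact (order_coe_le_degree hm).trans (by exact_mod_cast le_totalDegree hm)

theorem isHomogeneous_totalDegree_of_le_order {P : MvPolynomial σ K}
    (h : (P.totalDegree : ℕ∞) ≤ (P : MvPowerSeries σ K).order) :
    P.IsHomogeneous P.totalDegree := by
  intro m hm
  have hm' := mem_support_iff.mpr hm
  have hle : (P.totalDegree : ℕ∞) ≤ m.degree := h.trans (order_coe_le_degree hm')
  have hdeg : m.degree = P.totalDegree :=
    le_antisymm (le_totalDegree hm') (by exact_mod_cast hle)
  rw [Finsupp.degree_eq_weight_one] at hdeg
  exact hdeg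

/-- The lowest and the highest degree of a product are additive, and they agree exactly for
homogeneous polynomials; so they agree for each factor of a homogeneous product. -/
theorem IsHomogeneous.of_mul_right {A B : MvPolynomial σ K} {d : ℕ}
    (h : (A * B).IsHomogeneous d) (hA : A ≠ 0) (hB : B ≠ 0) : B.IsHomogeneous B.totalDegree := by
  apply isHomogeneous_totalDegree_of_le_order
  have hdeg : A.totalDegree + B.totalDegree = d := by
    rw [← totalDegree_mul_of_isDomain hA hB, h.totalDegree (mul_ne_zero hA hB)]
  have hord := order_coe_of_isHomogeneous h (mul_ne_zero hA hB)
  rw [coe_mul, MvPowerSeries.order_mul] at hord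
  have hleA := order_coe_le_totalDegree hA
  obtain ⟨a, ha⟩ := ENat.ne_top_iff_exists.mp (order_coe_ne_top hA)
  obtain ⟨b, hb⟩ := ENat.ne_top_iff_exists.mp (order_coe_ne_top hB)
  rw [← ha, ← hb] at hord
  rw [← ha] at hleA
  rw [← hb]
  norm_cast at hord hleA ⊢
  omega

def translate (p : σ → K) : MvPolynomial σ K →ₐ[K] MvPolynomial σ K :=
  aeval fun i => X i + C (p i)

theorem translate_X (p : σ → K) (i : σ) : translate p (X i) = X i + C (p i) :=
  aeval_X _ _

theorem constantCoeff_translate (p : σ → K) (F : MvPolynomial σ K) :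
    constantCoeff (translate p F) = eval p F := by
  induction F using MvPolynomial.induction_on <;> simp_all [translate]

theorem pderiv_translate (p : σ → K) (i : σ) (F : MvPolynomial σ K) :
    pderiv i (translate p F) = translate p (pderiv i F) := by
  classical
  induction F using MvPolynomial.induction_on with
  | C c => simp [translate]
  | add f g hf hg => simp only [map_add, hf, hg]
  | mul_X f j hf =>
    simp only [map_mul, Derivation.leibniz, hf, translate_X, pderiv_X, smul_eq_mul, map_add,
      pderiv_C, add_zero, Pi.single_apply]
    split_ifs <;> simp

def multAt (p : σ → K) (F : MvPolynomial σ K) : ℕ∞ :=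
  ((translate p F : MvPolynomial σ K) : MvPowerSeries σ K).order

theorem multAt_mul (p : σ → K) (F G : MvPolynomial σ K) :
    multAt p (F * G) = multAt p F + multAt p G := by
  simp only [multAt, map_mul, coe_mul, MvPowerSeries.order_mul]

theorem multAt_prod {ι : Type*} (p : σ → K) (s : Finset ι) (F : ι → MvPolynomial σ K) :
    multAt p (∏ i ∈ s, F i) = ∑ i ∈ s, multAt p (F i) := by
  simp only [multAt, map_prod, ← coeToMvPowerSeries.ringHom_apply, MvPowerSeries.order_prod]

theorem multAt_pow (p : σ → K) (F : MvPolynomial σ K) (n : ℕ) :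
    multAt p (F ^ n) = n * multAt p F := by
  simpa using multAt_prod p (Finset.range n) fun _ => F

theorem multAt_eq_zero_iff {p : σ → K} {F : MvPolynomial σ K} :
    multAt p F = 0 ↔ eval p F ≠ 0 := by
  rw [multAt, ← not_iff_not, ← ne_eq, MvPowerSeries.order_ne_zero_iff_constCoeff_eq_zero,
    ← MvPowerSeries.coeff_zero_eq_constantCoeff_apply, coeff_coe, ← constantCoeff_eq,
    constantCoeff_translate, not_not]

theorem sub_aeval_mem {R : Type*} [CommRing R] {I : Ideal (MvPolynomial σ R)}
    {f : σ → MvPolynomial σ R} (hf : ∀ i, X i - f i ∈ I) (F : MvPolynomial σ R) :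
    F - aeval f F ∈ I := by
  rw [← Ideal.Quotient.eq]
  suffices (Ideal.Quotient.mkₐ R I).comp (aeval f) = Ideal.Quotient.mkₐ R I from
    (DFunLike.congr_fun this F).symm
  exact algHom_ext fun i => by simpa [Ideal.Quotient.eq] using I.neg_mem_iff.mpr (hf i)

section LinearForm

variable [Fintype σ]

def linearForm (v : σ → K) : MvPolynomial σ K := ∑ i, C (v i) * X i

theorem isHomogeneous_linearForm (v : σ → K) : (linearForm v).IsHomogeneous 1 :=
  IsHomogeneous.sum _ _ _ fun _ _ => isHomogeneous_C_mul_X _ _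

theorem eval_linearForm (y v : σ → K) : eval y (linearForm v) = v ⬝ᵥ y := by
  simp [linearForm, dotProduct]

theorem coeff_linearForm [DecidableEq σ] (v : σ → K) (i : σ) :
    coeff (Finsupp.single i 1) (linearForm v) = v i := by
  simp [linearForm, coeff_sum, coeff_C_mul, coeff_X, Finsupp.single_eq_single_iff]

theorem linearForm_injective : Function.Injective (linearForm : (σ → K) → MvPolynomial σ K) := by
  classical
  intro v w h
  ext i
  rw [← coeff_linearForm v i, ← coeff_linearForm w i, h]

theorem linearForm_eq_zero_iff {v : σ → K} : linearForm v = 0 ↔ v = 0 := by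
  rw [← linearForm_injective.eq_iff, show linearForm (0 : σ → K) = 0 by simp [linearForm]]

theorem C_mul_linearForm (c : K) (v : σ → K) : C c * linearForm v = linearForm (c • v) := by
  simp [linearForm, Finset.mul_sum, mul_assoc]

theorem totalDegree_linearForm {v : σ → K} (hv : v ≠ 0) : (linearForm v).totalDegree = 1 :=
  (isHomogeneous_linearForm v).totalDegree (linearForm_eq_zero_iff.not.mpr hv)

theorem prime_linearForm {v : σ → K} (hv : v ≠ 0) : Prime (linearForm v) := by
  classical
  refine (irreducible_of_totalDegree_eq_one (totalDegree_linearForm hv) fun c hc => ?_).prime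
  obtain ⟨i, hi⟩ := Function.ne_iff.mp hv
  refine isUnit_iff_ne_zero.mpr fun hc0 => hi ?_
  simpa [hc0, coeff_linearForm] using hc (Finsupp.single i 1)

theorem exists_eq_smul_of_linearForm_dvd {v w : σ → K} (h : linearForm v ∣ linearForm w) :
    ∃ c : K, w = c • v := by
  obtain ⟨u, hu⟩ := h
  rcases eq_or_ne w 0 with rfl | hw
  · exact ⟨0, by simp⟩
  have hw' : linearForm w ≠ 0 := linearForm_eq_zero_iff.not.mpr hw
  have hv' : linearForm v ≠ 0 := left_ne_zero_of_mul (hu ▸ hw')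
  have hu0 : u ≠ 0 := right_ne_zero_of_mul (hu ▸ hw')
  have hdeg := congrArg totalDegree hu
  rw [totalDegree_mul_of_isDomain hv' hu0, totalDegree_linearForm hw,
    totalDegree_linearForm (linearForm_eq_zero_iff.not.mp hv')] at hdeg
  rw [(totalDegree_eq_zero_iff_eq_C (p := u)).mp (by omega), mul_comm, C_mul_linearForm] at hu
  exact ⟨_, linearForm_injective hu⟩

theorem isRelPrime_linearForm {v w : σ → K} (hv : v ≠ 0) (hvw : ∀ c : K, w ≠ c • v) :
    IsRelPrime (linearForm v) (linearForm w) :=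
  (prime_linearForm hv).irreducible.isRelPrime_iff_not_dvd.mpr fun h =>
    let ⟨c, hc⟩ := exists_eq_smul_of_linearForm_dvd h
    hvw c hc

theorem translate_linearForm (p v : σ → K) :
    translate p (linearForm v) = linearForm v + C (eval p (linearForm v)) := by
  simp [translate, linearForm, mul_add, Finset.sum_add_distrib]

theorem multAt_linearForm {p v : σ → K} (hv : v ≠ 0) (hp : eval p (linearForm v) = 0) :
    multAt p (linearForm v) = 1 := by
  rw [multAt, translate_linearForm, hp, C_0, add_zero]
  exact_mod_cast order_coe_of_isHomogeneous (isHomogeneous_linearForm v)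
    (linearForm_eq_zero_iff.not.mpr hv)

/-- Projecting along the `j`-th coordinate axis onto the hyperplane `v = 0` changes `F` by a
multiple of `linearForm v`, and the projected polynomial vanishes identically. -/
theorem linearForm_dvd_of_eval_eq_zero [Infinite K] {v : σ → K} (hv : v ≠ 0)
    {F : MvPolynomial σ K} (hF : ∀ y, eval y (linearForm v) = 0 → eval y F = 0) :
    linearForm v ∣ F := by
  classical
  obtain ⟨j, hj⟩ : ∃ j, v j ≠ 0 := Function.ne_iff.mp hv
  set w : σ → K := Pi.single j (v j)⁻¹
  have hproj (y : σ → K) :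
      eval (fun i => y i - w i * eval y (linearForm v)) (linearForm v) = 0 := by
    simp [w, eval_linearForm, dotProduct, mul_sub, Finset.sum_sub_distrib, Pi.single_apply, hj]
  have hzero : aeval (fun i => X i - C (w i) * linearForm v) F = 0 := by
    refine MvPolynomial.funext fun y => ?_
    rw [map_zero, eval_aeval]
    simpa [eval_linearForm] using hF _ (hproj y)
  rw [← Ideal.mem_span_singleton, ← sub_zero F, ← hzero]
  refine sub_aeval_mem (fun i => ?_) F
  rw [sub_sub_cancel]
  exact Ideal.mul_mem_left _ _ (Ideal.mem_span_singleton_self _)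

end LinearForm

section LinearSubst

variable [Fintype τ]

def linearSubst (A : Matrix σ τ K) : MvPolynomial σ K →ₐ[K] MvPolynomial τ K :=
  aeval fun i => linearForm (A i)

theorem eval_linearSubst (A : Matrix σ τ K) (y : τ → K) (F : MvPolynomial σ K) :
    eval y (linearSubst A F) = eval (A *ᵥ y) F := by
  simp only [linearSubst, eval_aeval, eval_linearForm]
  rfl

theorem IsHomogeneous.linearSubst {F : MvPolynomial σ K} {d : ℕ} (hF : F.IsHomogeneous d)
    (A : Matrix σ τ K) : (linearSubst A F).IsHomogeneous d := by
  have := hF.aeval (fun i => linearForm (A i)) fun i => isHomogeneous_linearForm (A i)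
  rwa [one_mul] at this

theorem translate_linearSubst (A : Matrix σ τ K) (y : τ → K) (F : MvPolynomial σ K) :
    translate y (linearSubst A F) = linearSubst A (translate (A *ᵥ y) F) := by
  suffices (translate y).comp (linearSubst A) = (linearSubst A).comp (translate (A *ᵥ y)) from
    DFunLike.congr_fun this F
  refine algHom_ext fun i => ?_
  simp only [AlgHom.comp_apply, linearSubst, aeval_X, translate_X, map_add, aeval_C,
    algebraMap_eq]
  rw [translate_linearForm, eval_linearForm]
  rfl

theorem order_coe_le_order_coe_linearSubst (A : Matrix σ τ K) (F : MvPolynomial σ K) :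
    (F : MvPowerSeries σ K).order ≤ (linearSubst A F : MvPowerSeries τ K).order := by
  refine MvPowerSeries.le_order fun m hm => ?_
  rw [coeff_coe, ← sum_homogeneousComponent F, map_sum, coeff_sum]
  refine Finset.sum_eq_zero fun e _ => ?_
  rcases lt_or_ge (e : ℕ∞) (F : MvPowerSeries σ K).order with he | he
  · suffices homogeneousComponent e F = 0 by rw [this, map_zero, coeff_zero]
    ext d
    rw [coeff_homogeneousComponent, coeff_zero]
    split_ifs with hd
    · rw [← coeff_coe]
      exact MvPowerSeries.coeff_of_lt_order (hd ▸ he)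
    · rfl
  · refine ((homogeneousComponent_isHomogeneous e F).linearSubst A).coeff_eq_zero fun h => ?_
    rw [h] at hm
    exact absurd he (not_le.mpr hm)

theorem multAt_le_multAt_linearSubst (A : Matrix σ τ K) (y : τ → K) (F : MvPolynomial σ K) :
    multAt (A *ᵥ y) F ≤ multAt y (linearSubst A F) := by
  rw [multAt, multAt, translate_linearSubst]
  exact order_coe_le_order_coe_linearSubst A _

end LinearSubst

section BinaryForm

def binaryLineForm (a : Fin 2 → K) : MvPolynomial (Fin 2) K := linearForm ![a 1, -a 0]

theorem eval_binaryLineForm (a y : Fin 2 → K) :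
    eval y (binaryLineForm a) = a 1 * y 0 - a 0 * y 1 := by
  simp [binaryLineForm, eval_linearForm, dotProduct, Fin.sum_univ_two]
  ring

theorem eq_smul_of_eval_binaryLineForm_eq_zero {a y : Fin 2 → K} (ha : a ≠ 0)
    (hy : eval y (binaryLineForm a) = 0) : ∃ c : K, y = c • a := by
  rw [eval_binaryLineForm, sub_eq_zero] at hy
  by_cases h0 : a 0 = 0
  · have h1 : a 1 ≠ 0 := fun h1 => ha (by ext i; fin_cases i <;> simp [h0, h1])
    refine ⟨y 1 / a 1, ?_⟩
    ext i
    fin_cases i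
    · simpa [h0, h1] using hy
    · simp [h1]
  · refine ⟨y 0 / a 0, ?_⟩
    ext i
    fin_cases i
    · simp [h0]
    · simp only [Fin.mk_one, Fin.isValue, Pi.smul_apply, smul_eq_mul]
      rw [div_mul_eq_mul_div, eq_div_iff h0]
      linear_combination -hy

theorem binaryLineForm_coeffs_ne_zero {a : Fin 2 → K} (ha : a ≠ 0) : ![a 1, -a 0] ≠ 0 := by
  intro h
  apply ha
  ext i
  fin_cases i
  · simpa using congrFun h 1
  · simpa using congrFun h 0

theorem isRelPrime_binaryLineForm {a b : Fin 2 → K} (ha : a ≠ 0) (hba : ∀ c : K, b ≠ c • a) :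
    IsRelPrime (binaryLineForm a) (binaryLineForm b) := by
  refine isRelPrime_linearForm (binaryLineForm_coeffs_ne_zero ha) fun c h => hba c ?_
  ext i
  fin_cases i
  · simpa using congrFun h 1
  · simpa using congrFun h 0

variable [Infinite K]

theorem binaryLineForm_pow_dvd_of_le_multAt {a : Fin 2 → K} (ha : a ≠ 0) :
    ∀ (m : ℕ) {G : MvPolynomial (Fin 2) K} {d : ℕ}, G.IsHomogeneous d →
      (m : ℕ∞) ≤ multAt a G → binaryLineForm a ^ m ∣ G
  | 0, _, _, _, _ => by simp
  | m + 1, G, d, hG, hm => by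
    rcases eq_or_ne G 0 with rfl | hG0
    · exact dvd_zero _
    have hGa : eval a G = 0 := by
      by_contra h
      rw [multAt_eq_zero_iff.mpr h] at hm
      exact absurd hm (by simp)
    obtain ⟨H, rfl⟩ : binaryLineForm a ∣ G := by
      refine linearForm_dvd_of_eval_eq_zero (binaryLineForm_coeffs_ne_zero ha) fun y hy => ?_
      obtain ⟨c, rfl⟩ := eq_smul_of_eval_binaryLineForm_eq_zero ha hy
      rw [hG.eval_smul, hGa, mul_zero]
    have hℓa : multAt a (binaryLineForm a) = 1 := by
      refine multAt_linearForm (binaryLineForm_coeffs_ne_zero ha) ?_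
      rw [← binaryLineForm, eval_binaryLineForm, mul_comm, sub_self]
    rw [multAt_mul, hℓa, Nat.cast_add, Nat.cast_one, add_comm] at hm
    rw [pow_succ']
    exact mul_dvd_mul_left _ (binaryLineForm_pow_dvd_of_le_multAt ha m
      (hG.of_mul_right (left_ne_zero_of_mul hG0) (right_ne_zero_of_mul hG0))
      ((ENat.add_le_add_iff_left ENat.one_ne_top).mp hm))

theorem eq_zero_of_le_multAt_of_lt_three_mul {G : MvPolynomial (Fin 2) K} {d m : ℕ}
    (hG : G.IsHomogeneous d) (hd : d < 3 * m) {a b c : Fin 2 → K} (ha : a ≠ 0)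
    (hba : ∀ t : K, b ≠ t • a) (hca : ∀ t : K, c ≠ t • a) (hcb : ∀ t : K, c ≠ t • b)
    (hGa : (m : ℕ∞) ≤ multAt a G) (hGb : (m : ℕ∞) ≤ multAt b G)
    (hGc : (m : ℕ∞) ≤ multAt c G) : G = 0 := by
  by_contra hG0
  have hb : b ≠ 0 := by simpa using hba 0
  have hc : c ≠ 0 := by simpa using hca 0
  have hdvd : binaryLineForm a ^ m * binaryLineForm b ^ m * binaryLineForm c ^ m ∣ G :=
    ((isRelPrime_binaryLineForm ha hca).pow.mul_left (isRelPrime_binaryLineForm hb hcb).pow).mul_dvd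
      ((isRelPrime_binaryLineForm ha hba).pow.mul_dvd
        (binaryLineForm_pow_dvd_of_le_multAt ha m hG hGa)
        (binaryLineForm_pow_dvd_of_le_multAt hb m hG hGb))
      (binaryLineForm_pow_dvd_of_le_multAt hc m hG hGc)
  have hprod : (binaryLineForm a ^ m * binaryLineForm b ^ m * binaryLineForm c ^ m).IsHomogeneous
      (1 * m + 1 * m + 1 * m) :=
    (((isHomogeneous_linearForm _).pow m).mul ((isHomogeneous_linearForm _).pow m)).mul
      ((isHomogeneous_linearForm _).pow m)
  have hle := totalDegree_le_of_dvd_of_isDomain hdvd hG0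
  rw [hprod.totalDegree (ne_zero_of_dvd_ne_zero hG0 hdvd), hG.totalDegree hG0] at hle
  omega

end BinaryForm

/-- The matrix with rows `q₁, q₂, y` kills `lam ≠ 0`, so it is singular. -/
theorem exists_eq_smul_add_smul_of_dotProduct_eq_zero {lam q₁ q₂ y : Fin 3 → K} (hlam : lam ≠ 0)
    (hq₁ : q₁ ≠ 0) (h₂₁ : ∀ c : K, q₂ ≠ c • q₁) (h₁ : lam ⬝ᵥ q₁ = 0) (h₂ : lam ⬝ᵥ q₂ = 0)
    (hy : lam ⬝ᵥ y = 0) : ∃ a b : K, y = a • q₁ + b • q₂ := by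
  set M : Matrix (Fin 3) (Fin 3) K := Matrix.of ![q₁, q₂, y]
  have hdet : M.det = 0 := by
    refine Matrix.exists_mulVec_eq_zero_iff.mp ⟨lam, hlam, ?_⟩
    ext i
    fin_cases i <;> simp [M, Matrix.mulVec, dotProduct_comm _ lam, h₁, h₂, hy]
  obtain ⟨w, hw0, hw⟩ := Matrix.exists_vecMul_eq_zero_iff.mpr hdet
  have hw' : w 0 • q₁ + w 1 • q₂ + w 2 • y = 0 := by
    rw [← hw]
    ext i
    simp [M, Matrix.vecMul, dotProduct, Fin.sum_univ_three]
  have hw2 : w 2 ≠ 0 := by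
    intro hw2
    rw [hw2, zero_smul, add_zero] at hw'
    have hw1 : w 1 = 0 := by
      by_contra hw1
      refine h₂₁ (-(w 0 / w 1)) ?_
      ext i
      have := congrFun hw' i
      simp only [Pi.add_apply, Pi.smul_apply, smul_eq_mul, Pi.zero_apply] at this ⊢
      field_simp
      linear_combination this
    have hw0' : w 0 = 0 := by
      rw [hw1, zero_smul, add_zero, smul_eq_zero] at hw'
      exact hw'.resolve_right hq₁
    exact hw0 (by ext i; fin_cases i <;> simp [hw0', hw1, hw2])
  refine ⟨-(w 0 / w 2), -(w 1 / w 2), ?_⟩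
  ext i
  have := congrFun hw' i
  simp only [Pi.add_apply, Pi.smul_apply, smul_eq_mul, Pi.zero_apply] at this ⊢
  field_simp
  linear_combination this

/-- Restricted to the line `lam = 0`, parametrised by `q₁` and `q₂`, the curve `F = 0` becomes a
binary form of degree `d < 3 m` with three `m`-fold roots. -/
theorem linearForm_dvd_of_le_multAt_of_lt_three_mul [Infinite K] {lam q₁ q₂ q₃ : Fin 3 → K}
    (hlam : lam ≠ 0) (hq₁ : q₁ ≠ 0) (h₂₁ : ∀ c : K, q₂ ≠ c • q₁) (h₃₁ : ∀ c : K, q₃ ≠ c • q₁)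
    (h₃₂ : ∀ c : K, q₃ ≠ c • q₂) (h₁ : lam ⬝ᵥ q₁ = 0) (h₂ : lam ⬝ᵥ q₂ = 0)
    (h₃ : lam ⬝ᵥ q₃ = 0) {F : MvPolynomial (Fin 3) K} {d m : ℕ} (hF : F.IsHomogeneous d)
    (hd : d < 3 * m) (hF₁ : (m : ℕ∞) ≤ multAt q₁ F) (hF₂ : (m : ℕ∞) ≤ multAt q₂ F)
    (hF₃ : (m : ℕ∞) ≤ multAt q₃ F) :
    linearForm lam ∣ F := by
  have hspan {y : Fin 3 → K} (hy : lam ⬝ᵥ y = 0) : ∃ a b : K, y = a • q₁ + b • q₂ :=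
    exists_eq_smul_add_smul_of_dotProduct_eq_zero hlam hq₁ h₂₁ h₁ h₂ hy
  obtain ⟨A, hA⟩ : ∃ A : Matrix (Fin 3) (Fin 2) K, ∀ y, A *ᵥ y = y 0 • q₁ + y 1 • q₂ :=
    ⟨Matrix.of fun i => ![q₁ i, q₂ i], fun y => by
      ext i
      simp [Matrix.mulVec, dotProduct, Fin.sum_univ_two, mul_comm]⟩
  have hmult {y : Fin 2 → K} (h : (m : ℕ∞) ≤ multAt (A *ᵥ y) F) :
      (m : ℕ∞) ≤ multAt y (linearSubst A F) :=
    h.trans (multAt_le_multAt_linearSubst A y F)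
  obtain ⟨α, β, rfl⟩ := hspan h₃
  have hG : linearSubst A F = 0 := by
    refine eq_zero_of_le_multAt_of_lt_three_mul (hF.linearSubst A) hd (a := ![1, 0])
      (b := ![0, 1]) (c := ![α, β]) (by simp) (fun t h => by simpa using congrFun h 1) ?_ ?_
      (hmult (by simpa [hA] using hF₁)) (hmult (by simpa [hA] using hF₂))
      (hmult (by simpa [hA] using hF₃))
    · exact fun t h => h₃₁ α (by simpa using Or.inl (congrFun h 1))
    · exact fun t h => h₃₂ β (by simpa using Or.inl (congrFun h 0))
  refine linearForm_dvd_of_eval_eq_zero hlam fun y hy => ?_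
  obtain ⟨a, b, rfl⟩ := hspan (by rwa [eval_linearForm] at hy)
  simpa [eval_linearSubst, hA] using congrArg (eval ![a, b]) hG

end MvPolynomial

theorem diffOp_cons (i : Fin 3) (L : List (Fin 3)) (F : S3) :
    diffOp (i :: L) F = pderiv i (diffOp L F) := rfl

theorem diffOp_translate (p : Fin 3 → ℝ) (L : List (Fin 3)) (F : S3) :
    diffOp L (translate p F) = translate p (diffOp L F) := by
  induction L with
  | nil => rfl
  | cons i L ih => rw [diffOp_cons, diffOp_cons, ih, pderiv_translate]

theorem coeff_diffOp (L : List (Fin 3)) (Q : S3) (m : Fin 3 →₀ ℕ) :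
    ∃ c : ℕ, 0 < c ∧ coeff m (diffOp L Q) = c * coeff (m + Multiset.toFinsupp L) Q := by
  induction L generalizing m with
  | nil => exact ⟨1, one_pos, by simp [diffOp]⟩
  | cons i L ih =>
    obtain ⟨c, hc, hcoeff⟩ := ih (m + Finsupp.single i 1)
    refine ⟨c * (m i + 1), by positivity, ?_⟩
    rw [diffOp_cons, coeff_pderiv, hcoeff, ← Multiset.cons_coe, ← Multiset.singleton_add,
      Multiset.toFinsupp_add, Multiset.toFinsupp_singleton, add_assoc]
    push_cast
    ring

theorem vanishesToOrder_iff_le_multAt (F : S3) (p : Fin 3 → ℝ) (s : ℕ) :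
    VanishesToOrder F p s ↔ (s : ℕ∞) ≤ multAt p F := by
  have hcoeff (L : List (Fin 3)) : eval p (diffOp L F) = 0 ↔
      coeff (Multiset.toFinsupp L) (translate p F) = 0 := by
    obtain ⟨c, hc, h⟩ := coeff_diffOp L (translate p F) 0
    rw [← constantCoeff_translate, constantCoeff_eq, ← diffOp_translate, h, zero_add]
    simp [hc.ne']
  have hdeg (L : List (Fin 3)) :
      (Multiset.toFinsupp (L : Multiset (Fin 3))).degree = L.length := by
    rw [Finsupp.degree_apply, ← Multiset.coe_card]
    exact Multiset.toFinsupp_sum_eq _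
  simp only [VanishesToOrder, hcoeff, multAt]
  constructor
  · refine fun h => MvPowerSeries.nat_le_order fun m hm => ?_
    have hL := h (Finsupp.toMultiset m).toList (by
      rw [← Multiset.coe_card, Multiset.coe_toList, Finsupp.card_toMultiset]
      exact_mod_cast hm)
    rwa [Multiset.coe_toList, Finsupp.toMultiset_toFinsupp, ← coeff_coe] at hL
  · intro h L hL
    rw [← coeff_coe]
    refine MvPowerSeries.coeff_of_lt_order (lt_of_lt_of_le ?_ h)
    rw [hdeg]
    exact_mod_cast hL

theorem min_six_mul_sub_three_succ_le {n s e : ℕ} (hn : 4 ≤ n)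
    (h : min (6 * s - 3) ((s - 1) * n + 3) ≤ e) :
    min (6 * (s + 1) - 3) ((s + 1 - 1) * n + 3) ≤ n + e := by
  rcases s with _ | s
  · omega
  · simp only [Nat.add_sub_cancel] at h ⊢
    rw [add_mul, one_mul]
    rcases le_total n 6 with hn6 | hn6
    · have := Nat.mul_le_mul_left s hn6
      omega
    · have := Nat.mul_le_mul_left s hn6
      omega

theorem linForm_eq_linearForm (v : Fin 3 → ℝ) : linForm v = linearForm v := rfl

theorem isHomogeneous_prod_linForm {n : ℕ} (lam : Fin n → Fin 3 → ℝ) :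
    (∏ j, linForm (lam j)).IsHomogeneous n := by
  have := IsHomogeneous.prod Finset.univ _ (fun _ => 1) fun j _ => isHomogeneous_linearForm (lam j)
  simp only [Finset.sum_const, Finset.card_univ, Fintype.card_fin, smul_eq_mul, mul_one] at this
  exact this

namespace DualVertexStar

variable {k n : ℕ} {p : Fin k → Fin 3 → ℝ} {lam : Fin n → Fin 3 → ℝ}

theorem linForm_dvd (h : DualVertexStar p lam) (j : Fin n) {F : S3} {d m : ℕ}
    (hF : F.IsHomogeneous d) (hd : d < 3 * m) (hm : ∀ i, (m : ℕ∞) ≤ multAt (p i) F) :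
    linForm (lam j) ∣ F := by
  obtain ⟨⟨hp0, hp⟩, ⟨hl0, -⟩, -, -, hge3⟩ := h
  obtain ⟨T, hT, hT3⟩ := Finset.exists_subset_card_eq (hge3 j)
  obtain ⟨i₁, i₂, i₃, h₁₂, h₁₃, h₂₃, rfl⟩ := Finset.card_eq_three.mp hT3
  have hon (i) (hi : i ∈ ({i₁, i₂, i₃} : Finset (Fin k))) : lam j ⬝ᵥ p i = 0 := by
    simpa [linForm_eq_linearForm, eval_linearForm] using (Finset.mem_filter.mp (hT hi)).2
  exact linearForm_dvd_of_le_multAt_of_lt_three_mul (hl0 j) (hp0 i₁) (hp i₁ i₂ h₁₂)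
    (hp i₁ i₃ h₁₃) (hp i₂ i₃ h₂₃) (hon i₁ (by simp)) (hon i₂ (by simp)) (hon i₃ (by simp)) hF hd
    (hm i₁) (hm i₂) (hm i₃)

theorem prod_linForm_dvd (h : DualVertexStar p lam) {F : S3} (hF : ∀ j, linForm (lam j) ∣ F) :
    (∏ j, linForm (lam j)) ∣ F := by
  obtain ⟨-, ⟨hl0, hl⟩, -⟩ := h
  exact Fintype.prod_dvd_of_isRelPrime
    (fun j j' hjj' => isRelPrime_linearForm (hl0 j) (hl j j' hjj')) hF

theorem prod_linForm_ne_zero (h : DualVertexStar p lam) : (∏ j, linForm (lam j)) ≠ 0 :=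
  Finset.prod_ne_zero_iff.mpr fun j _ => linearForm_eq_zero_iff.not.mpr (h.2.1.1 j)

theorem multAt_prod_linForm (h : DualVertexStar p lam) (i : Fin k) :
    multAt (p i) (∏ j, linForm (lam j)) = 2 := by
  classical
  obtain ⟨-, ⟨hl0, -⟩, -, htwo, -⟩ := h
  have hterm (j : Fin n) : multAt (p i) (linForm (lam j)) =
      if eval (p i) (linForm (lam j)) = 0 then 1 else 0 := by
    split_ifs with hj
    · exact multAt_linearForm (hl0 j) hj
    · exact multAt_eq_zero_iff.mpr hj
  rw [multAt_prod, Finset.sum_congr rfl fun j _ => hterm j, Finset.sum_boole]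
  exact_mod_cast htwo i

theorem exists_eq_prod_linForm_mul (h : DualVertexStar p lam) {s d : ℕ} {F : S3} (hF0 : F ≠ 0)
    (hF : F.IsHomogeneous d) (hd : d < 6 * (s + 1))
    (hm : ∀ i, ((2 * (s + 1) : ℕ) : ℕ∞) ≤ multAt (p i) F) :
    ∃ G : S3, F = (∏ j, linForm (lam j)) * G ∧ G ≠ 0 ∧ G.IsHomogeneous G.totalDegree ∧
      n + G.totalDegree = d ∧ ∀ i, ((2 * s : ℕ) : ℕ∞) ≤ multAt (p i) G := by
  obtain ⟨G, rfl⟩ := h.prod_linForm_dvd fun j =>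
    h.linForm_dvd j hF (by omega : d < 3 * (2 * (s + 1))) hm
  have hG0 : G ≠ 0 := right_ne_zero_of_mul hF0
  refine ⟨G, rfl, hG0, hF.of_mul_right h.prod_linForm_ne_zero hG0, ?_, fun i => ?_⟩
  · rw [← hF.totalDegree hF0, totalDegree_mul_of_isDomain h.prod_linForm_ne_zero hG0,
      (isHomogeneous_prod_linForm lam).totalDegree h.prod_linForm_ne_zero]
  · have := hm i
    rw [multAt_mul, h.multAt_prod_linForm, mul_add, mul_one, Nat.cast_add, add_comm] at this
    exact (ENat.add_le_add_iff_left (by simp)).mp this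

theorem min_le_degree (h : DualVertexStar p lam) (s : ℕ) {d : ℕ} {F : S3} (hF0 : F ≠ 0)
    (hF : F.IsHomogeneous d) (hm : ∀ i, ((2 * s : ℕ) : ℕ∞) ≤ multAt (p i) F) :
    min (6 * s - 3) ((s - 1) * n + 3) ≤ d := by
  induction s generalizing d F with
  | zero => simp
  | succ s ih =>
    by_cases hd : 6 * (s + 1) ≤ d
    · omega
    obtain ⟨G, -, hG0, hG, rfl, hGm⟩ := h.exists_eq_prod_linForm_mul hF0 hF (by omega) hm
    exact min_six_mul_sub_three_succ_le h.2.2.1 (ih hG0 hG hGm)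

theorem vanishesToOrder_prod_linForm_pow (h : DualVertexStar p lam) (s : ℕ) (i : Fin k) :
    VanishesToOrder ((∏ j, linForm (lam j)) ^ s) (p i) (2 * s) := by
  rw [vanishesToOrder_iff_le_multAt, multAt_pow, h.multAt_prod_linForm, mul_comm]
  push_cast
  rfl

end DualVertexStar

/-- symbolic power initial degree bound for a dual vertex-star configuration:
for every `s ≥ 1`, `α_{2s}(X) ≥ min {6s − 3, (s − 1)·n + 3}`; that is, every nonzero
homogeneous polynomial vanishing to order `≥ 2s` at all the `p i` has degree at least
`min {6s − 3, (s − 1)·n + 3}`. -/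
theorem statement5 {k n : ℕ} (p : Fin k → (Fin 3 → ℝ)) (lam : Fin n → (Fin 3 → ℝ))
    (h : DualVertexStar p lam) :
    ∀ s : ℕ, 1 ≤ s →
      min (6 * s - 3) ((s - 1) * n + 3) ≤ alphaDeg p (2 * s) ∧
      ∀ (d : ℕ) (F : S3), F ≠ 0 → F.IsHomogeneous d →
        (∀ i, VanishesToOrder F (p i) (2 * s)) →
        min (6 * s - 3) ((s - 1) * n + 3) ≤ d := by
  intro s _
  have hdeg (d : ℕ) (F : S3) (hF0 : F ≠ 0) (hF : F.IsHomogeneous d)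
      (hv : ∀ i, VanishesToOrder F (p i) (2 * s)) : min (6 * s - 3) ((s - 1) * n + 3) ≤ d :=
    h.min_le_degree s hF0 hF fun i => (vanishesToOrder_iff_le_multAt F (p i) _).mp (hv i)
  refine ⟨?_, hdeg⟩
  -- `alphaDeg` is an `sInf`, which is `0` on the empty set; `(∏ j, linForm (lam j)) ^ s` shows
  -- that the set is nonempty.
  obtain ⟨F, hF0, hF, hv⟩ := Nat.sInf_mem (⟨n * s, (∏ j, linForm (lam j)) ^ s,
    pow_ne_zero s h.prod_linForm_ne_zero, (isHomogeneous_prod_linForm lam).pow s,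
    h.vanishesToOrder_prod_linForm_pow s⟩ : {d | ∃ F : S3, F ≠ 0 ∧ F.IsHomogeneous d ∧
      ∀ i, VanishesToOrder F (p i) (2 * s)}.Nonempty)
  exact hdeg _ F hF0 hF hv

end
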